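/- arXiv:0807.1851 — 5 statements merged into one kernel-verified Lean document; each statement's English description precedes it below -/
import Mathlib

section
/- If J ∈ Mat(n,K) is invertible (n ≥ 1), then the center of the Lie algebra (Mat(n,K), [·,·]_J) is the one-dimensional subspace K·J^{−1}. -/
/-! Taking `B = 1` shows that `A` commutes with `J`, so the condition `A J B = B J A` says that
`A J` commutes with every `B`. Hence `A J` is a scalar `c`, i.e. `A = c J⁻¹`; conversely
`c J⁻¹ J B = c B = B J c J⁻¹`. -/

namespace Matrix

variable {n R : Type*} [Fintype n] [DecidableEq n] [CommRing R]

theorem commute_mul_of_forall_mul_mul_eq {A J : Matrix n n R}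
    (h : ∀ B, A * J * B = B * J * A) (B : Matrix n n R) : Commute B (A * J) := by
  have hAJ : A * J = J * A := by simpa using h 1
  calc B * (A * J) = B * J * A := by rw [hAJ, Matrix.mul_assoc]
    _ = A * J * B := (h B).symm

theorem exists_smul_nonsing_inv_of_forall_mul_mul_eq {A J : Matrix n n R} (hJ : IsUnit J)
    (h : ∀ B, A * J * B = B * J * A) : ∃ c : R, c • J⁻¹ = A := by
  obtain ⟨c, hc⟩ := mem_range_scalar_iff_commute_single'.mpr
    fun i j => commute_mul_of_forall_mul_mul_eq h _
  refine ⟨c, ?_⟩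
  calc c • J⁻¹ = scalar n c * J⁻¹ := by rw [smul_eq_diagonal_mul, scalar_apply]
    _ = A := by rw [hc, mul_nonsing_inv_cancel_right J A ((isUnit_iff_isUnit_det J).mp hJ)]

theorem smul_nonsing_inv_mul_mul_eq {J : Matrix n n R} (hJ : IsUnit J) (c : R)
    (B : Matrix n n R) : c • J⁻¹ * J * B = B * J * (c • J⁻¹) := by
  have hdet := (isUnit_iff_isUnit_det J).mp hJ
  rw [Matrix.smul_mul, Matrix.smul_mul, Matrix.mul_smul, nonsing_inv_mul J hdet, Matrix.mul_assoc,
    mul_nonsing_inv J hdet, Matrix.one_mul, Matrix.mul_one]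

end Matrix

theorem stmt_6_general (K : Type*) [Field K] (n : ℕ)
    (J : Matrix (Fin n) (Fin n) K) (hJ : IsUnit J) :
    {A : Matrix (Fin n) (Fin n) K |
        ∀ B : Matrix (Fin n) (Fin n) K, A * J * B - B * J * A = 0} =
      Set.range (fun c : K => c • J⁻¹) := by
  ext A
  simp only [Set.mem_ofPred_eq, Set.mem_range, sub_eq_zero]
  constructor
  · exact Matrix.exists_smul_nonsing_inv_of_forall_mul_mul_eq hJ
  · rintro ⟨c, rfl⟩
    exact Matrix.smul_nonsing_inv_mul_mul_eq hJ c

/-- If `J ∈ Mat(n,K)` is invertible (`n ≥ 1`), the center of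
`(Mat(n,K), [·,·]_J)` is the one-dimensional subspace `K·J⁻¹`. -/
theorem stmt_6 (K : Type*) [Field K] [CharZero K] (n : ℕ) (hn : 1 ≤ n)
    (J : Matrix (Fin n) (Fin n) K) (hJ : IsUnit J) :
    {A : Matrix (Fin n) (Fin n) K |
        ∀ B : Matrix (Fin n) (Fin n) K, A * J * B - B * J * A = 0} =
      Set.range (fun c : K => c • J⁻¹) :=
  stmt_6_general K n J hJ
end

section
/- For 0 ≤ r < n, the center of the Lie algebra (Mat(n,K), [·,·]_{J_{n,r}}) consists exactly of the block matrices [[0,0],[0,A₄]] with A₄ ∈ Mat(n−r, K); in particular the center has dimension (n−r)². -/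
/-!
If `A J B = B J A` for all `B`, then `B = 1` gives `C := A J = J A`, and then
`C B = A J B = B J A = B C`, so `C` is a scalar matrix. As `J` is singular, `det C = 0`, which forces
`C = 0`. So the center is `{A | A J = 0 ∧ J A = 0}`, and for `J = diag(I_r, 0)` this says that every
block of `A` except the bottom-right one vanishes.
-/

namespace Matrix

section Twisted

variable {n R : Type*} [Fintype n] [DecidableEq n] [CommRing R]

def twistedBracket (J A B : Matrix n n R) : Matrix n n R := A * J * B - B * J * A

theorem mul_comm_of_forall_twistedBracket_eq_zero {J A : Matrix n n R}
    (h : ∀ B, twistedBracket J A B = 0) : A * J = J * A := by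
  simpa [twistedBracket, sub_eq_zero] using h 1

theorem mul_mem_range_scalar_of_forall_twistedBracket_eq_zero {J A : Matrix n n R}
    (h : ∀ B, twistedBracket J A B = 0) : A * J ∈ Set.range (scalar n) := by
  rw [← center_eq_range, Semigroup.mem_center_iff]
  intro B
  have hAB : A * J * B = B * J * A := sub_eq_zero.mp (h B)
  rw [hAB, Matrix.mul_assoc, ← mul_comm_of_forall_twistedBracket_eq_zero h]

theorem eq_zero_of_scalar_eq_mul_of_det_eq_zero [IsReduced R] {J A : Matrix n n R} {c : R}
    (hJ : J.det = 0) (hc : scalar n c = A * J) : c = 0 := by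
  refine IsReduced.eq_zero c ⟨Fintype.card n, ?_⟩
  have := congrArg det hc
  rwa [det_mul, hJ, mul_zero, scalar_apply, det_diagonal, Finset.prod_const] at this

theorem forall_twistedBracket_eq_zero_iff [IsReduced R] {J A : Matrix n n R} (hJ : J.det = 0) :
    (∀ B, twistedBracket J A B = 0) ↔ A * J = 0 ∧ J * A = 0 := by
  constructor
  · intro h
    obtain ⟨c, hc⟩ := mul_mem_range_scalar_of_forall_twistedBracket_eq_zero h
    have hAJ : A * J = 0 := by
      rw [← hc, eq_zero_of_scalar_eq_mul_of_det_eq_zero hJ hc, map_zero]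
    exact ⟨hAJ, mul_comm_of_forall_twistedBracket_eq_zero h ▸ hAJ⟩
  · rintro ⟨hAJ, hJA⟩ B
    rw [twistedBracket, hAJ, Matrix.mul_assoc B, hJA]
    simp

end Twisted

theorem det_fromBlocks_one_zero {m o R : Type*} [Fintype m] [Fintype o] [DecidableEq m]
    [DecidableEq o] [Nonempty o] [CommRing R] :
    (fromBlocks 1 0 0 0 : Matrix (m ⊕ o) (m ⊕ o) R).det = 0 := by
  rw [det_fromBlocks_zero₂₁, det_zero, mul_zero]

section Blocks

variable {m o R : Type*} [Semiring R]

section Mul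

variable [Fintype m] [Fintype o] [DecidableEq m]

theorem fromBlocks_mul_fromBlocks_one_zero (A : Matrix m m R) (B : Matrix m o R)
    (C : Matrix o m R) (D : Matrix o o R) :
    fromBlocks A B C D * fromBlocks 1 0 0 0 = fromBlocks A 0 C 0 := by
  simp [fromBlocks_multiply]

theorem fromBlocks_one_zero_mul_fromBlocks (A : Matrix m m R) (B : Matrix m o R)
    (C : Matrix o m R) (D : Matrix o o R) :
    fromBlocks 1 0 0 0 * fromBlocks A B C D = fromBlocks A B 0 0 := by
  simp [fromBlocks_multiply]

theorem mul_fromBlocks_one_zero_eq_zero_and_iff (A : Matrix (m ⊕ o) (m ⊕ o) R) :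
    A * fromBlocks 1 0 0 0 = 0 ∧ fromBlocks 1 0 0 0 * A = 0 ↔
      ∃ D, A = fromBlocks 0 0 0 D := by
  rw [← fromBlocks_toBlocks A, fromBlocks_mul_fromBlocks_one_zero,
    fromBlocks_one_zero_mul_fromBlocks, ← fromBlocks_zero]
  simp only [fromBlocks_inj]
  tauto

end Mul

def fromBlocks₂₂ₗ : Matrix o o R →ₗ[R] Matrix (m ⊕ o) (m ⊕ o) R where
  toFun D := fromBlocks 0 0 0 D
  map_add' D D' := by simp [fromBlocks_add]
  map_smul' c D := by simp [fromBlocks_smul]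

theorem range_fromBlocks₂₂ₗ :
    Set.range (fromBlocks₂₂ₗ : Matrix o o R →ₗ[R] Matrix (m ⊕ o) (m ⊕ o) R) =
      {A | ∃ D, A = fromBlocks 0 0 0 D} :=
  Set.ext fun _ => exists_congr fun _ => eq_comm

theorem fromBlocks₂₂ₗ_injective :
    Function.Injective (fromBlocks₂₂ₗ : Matrix o o R →ₗ[R] Matrix (m ⊕ o) (m ⊕ o) R) :=
  fun _ _ h => (fromBlocks_inj.mp h).2.2.2

end Blocks

end Matrix

/-- For `0 ≤ r < n` (here `n = r + s` with `s ≥ 1`), the center of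
`(Mat(n,K), [·,·]_{J_{n,r}})` consists exactly of the block matrices
`[[0,0],[0,A₄]]`, and it has dimension `(n-r)² = s²`. -/
theorem stmt_7 (K : Type*) [Field K] (r s : ℕ) (hs : 1 ≤ s) :
    let J : Matrix (Fin r ⊕ Fin s) (Fin r ⊕ Fin s) K := Matrix.fromBlocks 1 0 0 0
    ({A : Matrix (Fin r ⊕ Fin s) (Fin r ⊕ Fin s) K |
        ∀ B, A * J * B - B * J * A = 0} =
      {A | ∃ A₄ : Matrix (Fin s) (Fin s) K, A = Matrix.fromBlocks 0 0 0 A₄}) ∧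
    Module.finrank K
      (Submodule.span K {A : Matrix (Fin r ⊕ Fin s) (Fin r ⊕ Fin s) K |
        ∀ B, A * J * B - B * J * A = 0}) = s ^ 2 := by
  intro J
  have : Nonempty (Fin s) := ⟨⟨0, hs⟩⟩
  have hcenter : {A | ∀ B, Matrix.twistedBracket J A B = 0} =
      {A | ∃ A₄ : Matrix (Fin s) (Fin s) K, A = Matrix.fromBlocks 0 0 0 A₄} :=
    Set.ext fun A => (Matrix.forall_twistedBracket_eq_zero_iff Matrix.det_fromBlocks_one_zero).trans
      (Matrix.mul_fromBlocks_one_zero_eq_zero_and_iff A)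
  refine ⟨hcenter, ?_⟩
  change Module.finrank K (Submodule.span K {A | ∀ B, Matrix.twistedBracket J A B = 0}) = s ^ 2
  rw [hcenter, ← Matrix.range_fromBlocks₂₂ₗ, ← LinearMap.coe_range, Submodule.span_eq,
    LinearMap.finrank_range_of_inj Matrix.fromBlocks₂₂ₗ_injective, Module.finrank_matrix]
  simp [sq]
end

section
/- There is no faithful Lie algebra homomorphism from the (2n+1)-dimensional Heisenberg Lie algebra H_n into gl(V) for a vector space V over a field of characteristic zero with dim V ≤ n+1. Equivalently, any Lie algebra homomorphism ρ: H_n → gl(r, K) with r ≤ n+1 has nonzero kernel. -/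
/-!
Suppose the matrices were linearly independent. Then `Z ≠ 0`, and `Z = [X₁, Y₁]` is traceless,
so in characteristic zero `Z` is not a scalar and some `v` makes `v, Zv` linearly independent.
Send `(a, b) ∈ Kⁿ × Kⁿ` to the class of `(∑ aᵢXᵢ + ∑ bᵢYᵢ) v` modulo `span {v, Zv}`; since the
target has dimension `r - 2 ≤ n - 1`, the kernel has dimension at least `n + 1`. On the kernel,
each `M = ∑ aᵢXᵢ + ∑ bᵢYᵢ` becomes, after subtracting a multiple of the central `Z`, an operator
with eigenvector `v`; two such operators have a commutator killing `v`, while that commutator is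
`ω(p, q) Z` for the standard symplectic form `ω`. Hence the kernel is isotropic for `ω`, so has
dimension at most `n`.
-/

open Module Matrix

attribute [local instance] LieRing.ofAssociativeRing

def symplecticForm (ι K : Type*) [Fintype ι] [CommRing K] :
    ((ι → K) × (ι → K)) →ₗ[K] ((ι → K) × (ι → K)) →ₗ[K] K :=
  let β := (dotProductBilin K K).compl₁₂ (LinearMap.fst K (ι → K) (ι → K))
    (LinearMap.snd K (ι → K) (ι → K))
  β - β.flip

@[simp]
theorem symplecticForm_apply {ι K : Type*} [Fintype ι] [CommRing K] (u w : (ι → K) × (ι → K)) :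
    symplecticForm ι K u w = u.1 ⬝ᵥ w.2 - w.1 ⬝ᵥ u.2 :=
  rfl

theorem symplecticForm_injective {ι K : Type*} [Fintype ι] [DecidableEq ι] [CommRing K] :
    Function.Injective (symplecticForm ι K) := by
  rw [← LinearMap.ker_eq_bot, LinearMap.ker_eq_bot']
  intro u hu
  ext i
  · simpa using LinearMap.congr_fun hu (0, Pi.single i 1)
  · simpa using LinearMap.congr_fun hu (Pi.single i 1, 0)

theorem two_mul_finrank_le_of_isotropic {K V : Type*} [Field K] [AddCommGroup V] [Module K V]
    [FiniteDimensional K V] {ω : V →ₗ[K] V →ₗ[K] K} (hω : Function.Injective ω)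
    (W : Submodule K V) (hW : ∀ u ∈ W, ∀ w ∈ W, ω u w = 0) :
    2 * finrank K W ≤ finrank K V := by
  have hmaps : ∀ u ∈ W, ω u ∈ W.dualAnnihilator := fun u hu =>
    (Submodule.mem_dualAnnihilator _).2 fun w hw => hW u hu w hw
  have hle := LinearMap.finrank_le_finrank_of_injective
    (f := (ω.domRestrict W).codRestrict _ fun u => hmaps u u.2)
    fun u w h => Subtype.ext (hω (congrArg Subtype.val h))
  have := Subspace.finrank_add_finrank_dualAnnihilator_eq W
  linarith

section Heisenberg

variable {ι K L : Type*} [Fintype ι] [CommRing K] [LieRing L] [LieAlgebra K L]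

def heisenbergMap (X Y : ι → L) : ((ι → K) × (ι → K)) →ₗ[K] L :=
  (Fintype.linearCombination K X).coprod (Fintype.linearCombination K Y)

theorem heisenbergMap_apply (X Y : ι → L) (p : (ι → K) × (ι → K)) :
    heisenbergMap X Y p = ∑ i, p.1 i • X i + ∑ i, p.2 i • Y i := by
  simp [heisenbergMap, Fintype.linearCombination_apply]

theorem lie_linearCombination (X Y : ι → L) (a b : ι → K) :
    ⁅Fintype.linearCombination K X a, Fintype.linearCombination K Y b⁆ =
      ∑ i, ∑ j, (a i * b j) • ⁅X i, Y j⁆ := by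
  simp only [Fintype.linearCombination_apply, sum_lie_sum, smul_lie, lie_smul, smul_smul,
    mul_comm]

theorem lie_linearCombination_eq_zero {X Y : ι → L} (h : ∀ i j, ⁅X i, Y j⁆ = 0) (a b : ι → K) :
    ⁅Fintype.linearCombination K X a, Fintype.linearCombination K Y b⁆ = 0 := by
  simp [lie_linearCombination, h]

theorem lie_linearCombination_of_lie_eq_ite [DecidableEq ι] {X Y : ι → L} {Z : L}
    (h : ∀ i j, ⁅X i, Y j⁆ = if i = j then Z else 0) (a b : ι → K) :
    ⁅Fintype.linearCombination K X a, Fintype.linearCombination K Y b⁆ = (a ⬝ᵥ b) • Z := by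
  simp [lie_linearCombination, h, dotProduct, Finset.sum_smul]

theorem lie_heisenbergMap [DecidableEq ι] {X Y : ι → L} {Z : L}
    (hXY : ∀ i j, ⁅X i, Y j⁆ = if i = j then Z else 0)
    (hXX : ∀ i j, ⁅X i, X j⁆ = 0) (hYY : ∀ i j, ⁅Y i, Y j⁆ = 0) (p q : (ι → K) × (ι → K)) :
    ⁅heisenbergMap X Y p, heisenbergMap X Y q⁆ = symplecticForm ι K p q • Z := by
  rw [heisenbergMap, LinearMap.coprod_apply, LinearMap.coprod_apply, add_lie, lie_add, lie_add,
    lie_linearCombination_eq_zero hXX, lie_linearCombination_eq_zero hYY,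
    lie_linearCombination_of_lie_eq_ite hXY, ← lie_skew, lie_linearCombination_of_lie_eq_ite hXY,
    symplecticForm_apply, sub_smul]
  abel

theorem lie_heisenbergMap_eq_zero {X Y : ι → L} {Z : L}
    (hXZ : ∀ i, ⁅X i, Z⁆ = 0) (hYZ : ∀ i, ⁅Y i, Z⁆ = 0) (p : (ι → K) × (ι → K)) :
    ⁅heisenbergMap X Y p, Z⁆ = 0 := by
  simp [heisenbergMap_apply, sum_lie, hXZ, hYZ]

end Heisenberg

section Matrix

variable {K m : Type*} [Field K] [Fintype m] [DecidableEq m]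

theorem Matrix.exists_linearIndependent_pair_mulVec [CharZero K]
    {Z : Matrix m m K} (hZ : Z ≠ 0) (htr : Z.trace = 0) :
    ∃ v : m → K, LinearIndependent K ![v, Z *ᵥ v] := by
  by_contra! h
  obtain ⟨a, ha⟩ := LinearMap.exists_eq_smul_id_of_forall_notLinearIndependent (f := Z.mulVecLin) h
  have hZa : Z = a • 1 := toLin'.injective (by rw [map_smul, toLin'_one]; exact ha)
  rw [hZa, trace_smul, trace_one, smul_eq_mul, mul_eq_zero, Nat.cast_eq_zero,
    Fintype.card_eq_zero_iff] at htr
  rcases htr with rfl | hm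
  · exact hZ (by rw [hZa, zero_smul])
  · exact hZ (Subsingleton.elim _ _)

theorem Matrix.lie_mulVec_eq_zero {A B : Matrix m m K} {v : m → K} {a b : K}
    (hA : A *ᵥ v = a • v) (hB : B *ᵥ v = b • v) : ⁅A, B⁆ *ᵥ v = 0 := by
  rw [LieRing.of_associative_ring_bracket, sub_mulVec, ← mulVec_mulVec, ← mulVec_mulVec, hA, hB,
    mulVec_smul, mulVec_smul, hA, hB, smul_comm, sub_self]

theorem eq_zero_of_mulVec_mem_span_pair {V : Type*} {φ : V → Matrix m m K}
    {ω : V → V → K} {Z : Matrix m m K} (hφ : ∀ p q, ⁅φ p, φ q⁆ = ω p q • Z)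
    (hZ : ∀ p, ⁅φ p, Z⁆ = 0) {v : m → K} (hv : Z *ᵥ v ≠ 0) {p q : V}
    (hp : φ p *ᵥ v ∈ Submodule.span K {v, Z *ᵥ v})
    (hq : φ q *ᵥ v ∈ Submodule.span K {v, Z *ᵥ v}) :
    ω p q = 0 := by
  obtain ⟨a, c, hac⟩ := Submodule.mem_span_pair.1 hp
  obtain ⟨b, d, hbd⟩ := Submodule.mem_span_pair.1 hq
  have hA : (φ p - c • Z) *ᵥ v = a • v := by
    rw [sub_mulVec, ← hac, smul_mulVec, add_sub_cancel_right]
  have hB : (φ q - d • Z) *ᵥ v = b • v := by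
    rw [sub_mulVec, ← hbd, smul_mulVec, add_sub_cancel_right]
  have hbr : ⁅φ p - c • Z, φ q - d • Z⁆ = ω p q • Z := by
    rw [sub_lie, lie_sub, lie_sub, smul_lie, smul_lie, lie_smul, lie_smul, lie_self,
      ← lie_skew Z, hZ, hZ, hφ]
    simp
  have := lie_mulVec_eq_zero hA hB
  rw [hbr, smul_mulVec] at this
  exact (smul_eq_zero.1 this).resolve_right hv

end Matrix

/-- There is no faithful representation of the `(2n+1)`-dimensional Heisenberg
Lie algebra on a space of dimension `r ≤ n+1` over a field of characteristic
zero: if matrices `X₁,…,Xₙ,Y₁,…,Yₙ,Z ∈ Mat(r,K)` satisfy the Heisenberg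
relations `[Xᵢ,Yⱼ] = δᵢⱼ Z`, `[Xᵢ,Xⱼ] = [Yᵢ,Yⱼ] = 0`, `Z` central, under the
usual commutator, then they cannot be linearly independent (so any Lie algebra
homomorphism `ρ : H_n → gl(r,K)` has nonzero kernel). -/
theorem stmt_14 (K : Type*) [Field K] [CharZero K] (n r : ℕ) (hn : 1 ≤ n)
    (hr : r ≤ n + 1)
    (X Y : Fin n → Matrix (Fin r) (Fin r) K) (Z : Matrix (Fin r) (Fin r) K)
    (hXY : ∀ i j, X i * Y j - Y j * X i = if i = j then Z else 0)
    (hXX : ∀ i j, X i * X j = X j * X i)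
    (hYY : ∀ i j, Y i * Y j = Y j * Y i)
    (hXZ : ∀ i, X i * Z = Z * X i)
    (hYZ : ∀ i, Y i * Z = Z * Y i) :
    ¬ LinearIndependent K (Sum.elim X (Sum.elim Y (fun _ : Unit => Z))) := by
  intro hli
  have hZ : Z ≠ 0 := by simpa using hli.ne_zero (Sum.inr (Sum.inr ()))
  have htr : Z.trace = 0 := by
    have h := hXY ⟨0, hn⟩ ⟨0, hn⟩
    rw [if_pos rfl] at h
    rw [← h, trace_sub, trace_mul_comm, sub_self]
  obtain ⟨v, hv⟩ := exists_linearIndependent_pair_mulVec hZ htr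
  let W := Submodule.span K {v, Z *ᵥ v}
  let ψ := W.mkQ ∘ₗ (mulVecBilin K K).flip v ∘ₗ heisenbergMap (K := K) X Y
  have hker : n + 1 ≤ finrank K (LinearMap.ker ψ) := by
    have hW : finrank K W = 2 := by
      have := finrank_span_eq_card hv
      rwa [Matrix.range_cons_cons_empty, Fintype.card_fin] at this
    have := ψ.finrank_range_add_finrank_ker
    have := Submodule.finrank_le (LinearMap.range ψ)
    have := W.finrank_quotient_add_finrank
    simp only [finrank_prod, finrank_fin_fun] at *
    omega
  have hiso : ∀ p ∈ LinearMap.ker ψ, ∀ q ∈ LinearMap.ker ψ, symplecticForm (Fin n) K p q = 0 :=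
    fun p hp q hq => eq_zero_of_mulVec_mem_span_pair
      (lie_heisenbergMap hXY (fun i j => sub_eq_zero.2 (hXX i j)) fun i j => sub_eq_zero.2 (hYY i j))
      (lie_heisenbergMap_eq_zero (fun i => sub_eq_zero.2 (hXZ i)) fun i => sub_eq_zero.2 (hYZ i))
      (hv.ne_zero 1) (by simpa [ψ] using hp) (by simpa [ψ] using hq)
  have := two_mul_finrank_le_of_isotropic symplecticForm_injective _ hiso
  simp only [finrank_prod, finrank_fin_fun] at this
  omega
end

section
/- The 3-dimensional Heisenberg Lie algebra (basis X, Y, Z with [X,Y]=Z, Z central) admits a faithful realization in 2×2 matrices with the J_{2,1}-bracket: taking X = E_{2,1}, Y = E_{1,2}, Z = E_{2,2} and J = diag(1,0), one has [X,Y]_J = Z, [X,Z]_J = 0, [Y,Z]_J = 0, and the map is injective. -/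
/-!
With `J = E_{k,k}` and `l ≠ k`, the realization is `X = E_{l,k}`, `Y = E_{k,l}`, `Z = E_{l,l}`.
Every product `E_{a,b} J E_{c,d}` is `E_{a,d}` when `b = k = c` and zero otherwise, so the only
surviving term among the six products is `X J Y = E_{l,l} = Z`; injectivity holds because
`X, Y, Z` are three distinct matrix units.
-/

namespace Matrix

variable {n R : Type*} [Fintype n]

def jBracket [Ring R] (J A B : Matrix n n R) : Matrix n n R := A * J * B - B * J * A

variable [DecidableEq n]

section Ring

variable [Ring R] {k l : n}

theorem jBracket_single_single_eq_single (hkl : k ≠ l) :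
    jBracket (single k k (1 : R)) (single l k 1) (single k l 1) = single l l 1 := by
  simp [jBracket, single_mul_single_of_ne _ _ _ _ hkl.symm]

theorem jBracket_single_single_diag_eq_zero (hkl : k ≠ l) :
    jBracket (single k k (1 : R)) (single l k 1) (single l l 1) = 0 := by
  simp [jBracket, single_mul_single_of_ne _ _ _ _ hkl, single_mul_single_of_ne _ _ _ _ hkl.symm]

theorem jBracket_single_single_diag_eq_zero' (hkl : k ≠ l) :
    jBracket (single k k (1 : R)) (single k l 1) (single l l 1) = 0 := by
  simp [jBracket, single_mul_single_of_ne _ _ _ _ hkl.symm]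

end Ring

theorem linearIndependent_single_single_single [Semiring R] {k l : n} (hkl : k ≠ l) :
    LinearIndependent R ![single l k (1 : R), single k l 1, single l l 1] := by
  have hinj : Function.Injective ![(l, k), (k, l), (l, l)] := by
    intro i j hij
    fin_cases i <;> fin_cases j <;> simp_all [hkl.symm]
  convert (stdBasis R n n).linearIndependent.comp _ hinj using 1
  ext i : 1
  fin_cases i <;> simp [stdBasis_eq_single]

end Matrix

open Matrix in
/-- The 3-dimensional Heisenberg Lie algebra has a faithful realization in
`Mat(2,ℝ)` with the `J_{2,1}`-bracket: with `X = E_{2,1}`, `Y = E_{1,2}`,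
`Z = E_{2,2}` and `J = diag(1,0)` one has `[X,Y]_J = Z`, `[X,Z]_J = 0`,
`[Y,Z]_J = 0`, and `X, Y, Z` are linearly independent (the realization is
injective). -/
theorem stmt_15 :
    let J : Matrix (Fin 2) (Fin 2) ℝ := !![1, 0; 0, 0]
    let X : Matrix (Fin 2) (Fin 2) ℝ := !![0, 0; 1, 0]
    let Y : Matrix (Fin 2) (Fin 2) ℝ := !![0, 1; 0, 0]
    let Z : Matrix (Fin 2) (Fin 2) ℝ := !![0, 0; 0, 1]
    X * J * Y - Y * J * X = Z ∧
    X * J * Z - Z * J * X = 0 ∧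
    Y * J * Z - Z * J * Y = 0 ∧
    LinearIndependent ℝ ![X, Y, Z] := by
  intro J X Y Z
  have hJ : J = single 0 0 1 := by ext i j; fin_cases i <;> fin_cases j <;> simp [J]
  have hX : X = single 1 0 1 := by ext i j; fin_cases i <;> fin_cases j <;> simp [X]
  have hY : Y = single 0 1 1 := by ext i j; fin_cases i <;> fin_cases j <;> simp [Y]
  have hZ : Z = single 1 1 1 := by ext i j; fin_cases i <;> fin_cases j <;> simp [Z]
  have h01 : (0 : Fin 2) ≠ 1 := by decide
  rw [hJ, hX, hY, hZ]
  exact ⟨jBracket_single_single_eq_single h01, jBracket_single_single_diag_eq_zero h01,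
    jBracket_single_single_diag_eq_zero' h01, linearIndependent_single_single_single h01⟩
end

section
/- Define E'_{i,j}(ε) ∈ Mat(n,K) for ε ∈ K by E'_{i,j} = E_{i,j} if i,j ≤ r; ε·E_{i,j} if exactly one of i,j exceeds r; ε²·E_{i,j} if i,j > r. Then the ordinary commutator [E'_{i,j}(ε), E'_{k,l}(ε)], re-expressed in the rescaled basis, converges as ε → 0 to [E_{i,j}, E_{k,l}]_{J_{n,r}}. Hence (Mat(n,K), [·,·]_{J_{n,r}}) is a contraction of gl(n,K). -/
/-!
The rescaling is a conjugation: with `d_ε p = 1` for `p < r` and `d_ε p = ε` otherwise,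
`c(p, q, ε) = d_ε p · d_ε q`, so `φ_ε M = D_ε M D_ε` for `D_ε = diagonal d_ε`. Hence
`φ_ε⁻¹ (φ_ε A · φ_ε B) = A D_ε² B`, and `D_ε² → J_{n,r}` as `ε → 0`; by continuity of
matrix multiplication the rescaled commutator tends to `A J B - B J A`, for all matrices `A, B`.
-/

open Filter Topology Matrix

lemma ite_and_ite_eq_mul_ite {M : Type*} [Monoid M] (P Q : Prop) [Decidable P] [Decidable Q]
    (ε : M) :
    (if P ∧ Q then 1 else if ¬P ∧ ¬Q then ε ^ 2 else ε) =
      (if P then 1 else ε) * (if Q then 1 else ε) := by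
  by_cases hP : P <;> by_cases hQ : Q <;> simp [hP, hQ, sq]

section

variable {ι R : Type*} [Fintype ι] [DecidableEq ι]

lemma Matrix.of_mul_mul_eq_diagonal_mul_mul_diagonal [CommSemiring R] (d : ι → R)
    (M : Matrix ι ι R) :
    Matrix.of (fun p q => d p * d q * M p q) = diagonal d * M * diagonal d := by
  ext p q
  simp [mul_right_comm]

lemma Matrix.diagonal_inv_conj_mul_conj [DivisionRing R] {d : ι → R} (hd : ∀ p, d p ≠ 0)
    (A B : Matrix ι ι R) :
    diagonal d⁻¹ * (diagonal d * A * diagonal d * (diagonal d * B * diagonal d)) *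
        diagonal d⁻¹ = A * diagonal (d ^ 2) * B := by
  have hinv : diagonal d⁻¹ * diagonal d = 1 := by
    rw [diagonal_mul_diagonal, ← diagonal_one]
    exact congrArg diagonal (funext fun p => inv_mul_cancel₀ (hd p))
  have hinv' : diagonal d * diagonal d⁻¹ = 1 := by
    rw [diagonal_mul_diagonal, ← diagonal_one]
    exact congrArg diagonal (funext fun p => mul_inv_cancel₀ (hd p))
  have hsq : diagonal d * diagonal d = diagonal (d ^ 2) := by
    rw [diagonal_mul_diagonal, sq]; rfl
  rw [← hsq]
  simp only [Matrix.mul_assoc, hinv', Matrix.mul_one]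
  rw [← Matrix.mul_assoc, hinv, Matrix.one_mul]

omit [Fintype ι] in
lemma Matrix.tendsto_diagonal_ite_sq [Semiring R] [TopologicalSpace R] [IsTopologicalSemiring R]
    (P : ι → Prop) [DecidablePred P] :
    Tendsto (fun ε : R => diagonal fun p => (if P p then 1 else ε) ^ 2) (𝓝 0)
      (𝓝 (diagonal fun p => if P p then 1 else 0)) := by
  have hcont : Continuous fun ε : R => diagonal fun p => (if P p then 1 else ε) ^ 2 := by
    refine Continuous.matrix_diagonal (continuous_pi fun p => ?_)
    split_ifs <;> fun_prop
  simpa [apply_ite (· ^ 2)] using hcont.tendsto 0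

end

theorem stmt_16_general (n r : ℕ)
    (i j k l : Fin n) :
    let c : Fin n → Fin n → ℝ → ℝ := fun p q ε =>
      if (p : ℕ) < r ∧ (q : ℕ) < r then 1
      else if r ≤ (p : ℕ) ∧ r ≤ (q : ℕ) then ε ^ 2 else ε
    let φ : ℝ → Matrix (Fin n) (Fin n) ℝ → Matrix (Fin n) (Fin n) ℝ :=
      fun ε M => Matrix.of fun p q => c p q ε * M p q
    let φinv : ℝ → Matrix (Fin n) (Fin n) ℝ → Matrix (Fin n) (Fin n) ℝ :=
      fun ε M => Matrix.of fun p q => (c p q ε)⁻¹ * M p q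
    let J : Matrix (Fin n) (Fin n) ℝ :=
      Matrix.diagonal (fun p => if (p : ℕ) < r then 1 else 0)
    let E : Fin n → Fin n → Matrix (Fin n) (Fin n) ℝ :=
      fun p q => Matrix.single p q 1
    Filter.Tendsto
      (fun ε => φinv ε (φ ε (E i j) * φ ε (E k l) - φ ε (E k l) * φ ε (E i j)))
      (nhdsWithin 0 {ε : ℝ | ε ≠ 0})
      (nhds (E i j * J * E k l - E k l * J * E i j)) := by
  intro c φ φinv J E
  set d : ℝ → Fin n → ℝ := fun ε p => if (p : ℕ) < r then 1 else ε
  have hc : ∀ p q ε, c p q ε = d ε p * d ε q := fun p q ε => by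
    simpa only [not_lt] using ite_and_ite_eq_mul_ite ((p : ℕ) < r) ((q : ℕ) < r) ε
  have hφ : ∀ ε M, φ ε M = diagonal (d ε) * M * diagonal (d ε) := fun ε M => by
    simp only [φ, hc, of_mul_mul_eq_diagonal_mul_mul_diagonal]
  have hφinv : ∀ ε M, φinv ε M = diagonal (d ε)⁻¹ * M * diagonal (d ε)⁻¹ := fun ε M => by
    simp only [φinv, hc, mul_inv]
    exact of_mul_mul_eq_diagonal_mul_mul_diagonal (d ε)⁻¹ M
  have hd : ∀ ε ≠ 0, ∀ p, d ε p ≠ 0 := fun ε hε p => by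
    simp only [d]; split_ifs <;> simp [hε]
  have hcomm : ∀ ε ≠ (0 : ℝ), φinv ε (φ ε (E i j) * φ ε (E k l) - φ ε (E k l) * φ ε (E i j)) =
      E i j * diagonal (d ε ^ 2) * E k l - E k l * diagonal (d ε ^ 2) * E i j :=
    fun ε hε => by
      rw [hφinv, hφ, hφ, Matrix.mul_sub, Matrix.sub_mul, diagonal_inv_conj_mul_conj (hd ε hε),
        diagonal_inv_conj_mul_conj (hd ε hε)]
  have hD : Tendsto (fun ε => diagonal (d ε ^ 2)) (𝓝[≠] 0) (𝓝 J) :=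
    (tendsto_diagonal_ite_sq (fun p : Fin n => (p : ℕ) < r)).mono_left nhdsWithin_le_nhds
  refine Tendsto.congr' (eventually_nhdsWithin_of_forall fun ε hε => (hcomm ε hε).symm) ?_
  exact ((tendsto_const_nhds.mul hD).mul tendsto_const_nhds).sub
    ((tendsto_const_nhds.mul hD).mul tendsto_const_nhds)

/-- Contraction of `gl(n,ℝ)` to `(Mat(n,ℝ), [·,·]_{J_{n,r}})`: rescale the
matrix units by `φ_ε(E_{i,j}) = c(i,j,ε)·E_{i,j}` with `c = 1` if `i,j < r`,
`c = ε²` if `i,j ≥ r`, and `c = ε` otherwise.  Then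
`φ_ε⁻¹ [φ_ε E_{i,j}, φ_ε E_{k,l}]` (ordinary commutator) converges, as
`ε → 0` through nonzero values, to `[E_{i,j}, E_{k,l}]_{J_{n,r}}`. -/
theorem stmt_16 (n r : ℕ) (hn : 2 ≤ n) (hr : r ≤ n)
    (i j k l : Fin n) :
    let c : Fin n → Fin n → ℝ → ℝ := fun p q ε =>
      if (p : ℕ) < r ∧ (q : ℕ) < r then 1
      else if r ≤ (p : ℕ) ∧ r ≤ (q : ℕ) then ε ^ 2 else ε
    let φ : ℝ → Matrix (Fin n) (Fin n) ℝ → Matrix (Fin n) (Fin n) ℝ :=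
      fun ε M => Matrix.of fun p q => c p q ε * M p q
    let φinv : ℝ → Matrix (Fin n) (Fin n) ℝ → Matrix (Fin n) (Fin n) ℝ :=
      fun ε M => Matrix.of fun p q => (c p q ε)⁻¹ * M p q
    let J : Matrix (Fin n) (Fin n) ℝ :=
      Matrix.diagonal (fun p => if (p : ℕ) < r then 1 else 0)
    let E : Fin n → Fin n → Matrix (Fin n) (Fin n) ℝ :=
      fun p q => Matrix.single p q 1
    Filter.Tendsto
      (fun ε => φinv ε (φ ε (E i j) * φ ε (E k l) - φ ε (E k l) * φ ε (E i j)))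
      (nhdsWithin 0 {ε : ℝ | ε ≠ 0})
      (nhds (E i j * J * E k l - E k l * J * E i j)) :=
  stmt_16_general n r i j k l
end
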